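/- arXiv:math/0304248 — 2 statements merged into one kernel-verified Lean document; each statement's English description precedes it below -/
import Mathlib

section
/- With 0 < n₁, ρ ≠ 0, C_z > 0, and δ₀₀₄ - δ₀₀₃² - 1 > 0, the difference min Var(ρ̂_hd) - min Var(ρ̂_td) = (ρ²/n₁)[D²/(4C_z²) + ((D/C_z)δ₀₀₃ - F)²/(4(δ₀₀₄ - δ₀₀₃² - 1))] is nonnegative; it is strictly positive whenever D ≠ 0 or (D/C_z)δ₀₀₃ ≠ F. -/
lemma sq_div_add_sq_div_pos {x y p q : ℝ} (hp : 0 < p) (hq : 0 < q) (hxy : x ≠ 0 ∨ y ≠ 0) :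
    0 < x ^ 2 / p + y ^ 2 / q := by
  rcases hxy with hx | hy
  · exact add_pos_of_pos_of_nonneg (by positivity) (by positivity)
  · exact add_pos_of_nonneg_of_pos (by positivity) (by positivity)

theorem stmt_5 (D F Cz δ003 δ004 ρ : ℝ) (n₁ : ℕ) (hn₁ : 0 < n₁)
    (hρ : ρ ≠ 0) (hC : Cz > 0) (hδ : δ004 - δ003 ^ 2 - 1 > 0) :
    0 ≤ (ρ ^ 2 / (n₁ : ℝ)) *
        (D ^ 2 / (4 * Cz ^ 2) + ((D / Cz) * δ003 - F) ^ 2 / (4 * (δ004 - δ003 ^ 2 - 1))) ∧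
    ((D ≠ 0 ∨ (D / Cz) * δ003 ≠ F) →
      0 < (ρ ^ 2 / (n₁ : ℝ)) *
        (D ^ 2 / (4 * Cz ^ 2) + ((D / Cz) * δ003 - F) ^ 2 / (4 * (δ004 - δ003 ^ 2 - 1)))) := by
  have hscale : 0 < ρ ^ 2 / (n₁ : ℝ) := by positivity
  have hq : 0 < 4 * (δ004 - δ003 ^ 2 - 1) := by positivity
  refine ⟨mul_nonneg hscale.le (by positivity), fun h ↦ mul_pos hscale ?_⟩
  exact sq_div_add_sq_div_pos (by positivity) hq (h.imp_right sub_ne_zero.mpr)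
end

section
/- Let X : Fin N → ℝ with N ≥ 2, mean X̄ = (1/N)∑Xᵢ, central moments μ_k = (1/N)∑(Xᵢ - X̄)^k, and suppose μ₂ > 0. Define the standardized moments δ₃ = μ₃/μ₂^{3/2} and δ₄ = μ₄/μ₂². Then δ₄ ≥ δ₃² + 1. -/
/-! For centred data `y` the third moment is the covariance of `y` with `y² - μ₂`, because
`∑ y = 0` kills the constant. Cauchy–Schwarz then bounds `μ₃²` by `μ₂ · Var(y²) = μ₂ (μ₄ - μ₂²)`,
which after dividing by `μ₂³` is `δ₃² ≤ δ₄ - 1`. -/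

open Finset

theorem sq_sum_pow_three_le_of_sum_eq_zero {ι R : Type*} [CommRing R] [LinearOrder R]
    [IsStrictOrderedRing R] (s : Finset ι) (y : ι → R) (hy : ∑ i ∈ s, y i = 0) (c : R) :
    (∑ i ∈ s, y i ^ 3) ^ 2 ≤ (∑ i ∈ s, y i ^ 2) * ∑ i ∈ s, (y i ^ 2 - c) ^ 2 := by
  have hcov : ∑ i ∈ s, y i ^ 3 = ∑ i ∈ s, y i * (y i ^ 2 - c) := by
    simp only [mul_sub, sum_sub_distrib, ← sum_mul, hy, zero_mul, sub_zero]
    exact sum_congr rfl fun i _ => by ring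
  rw [hcov]
  exact sum_mul_sq_le_sq_mul_sq s y _

theorem stmt_6_general (N : ℕ) (X : Fin N → ℝ)
    (Xbar μ₂ μ₃ μ₄ : ℝ)
    (hXbar : Xbar = (1 / (N : ℝ)) * ∑ i, X i)
    (hμ₂ : μ₂ = (1 / (N : ℝ)) * ∑ i, (X i - Xbar) ^ 2)
    (hμ₃ : μ₃ = (1 / (N : ℝ)) * ∑ i, (X i - Xbar) ^ 3)
    (hμ₄ : μ₄ = (1 / (N : ℝ)) * ∑ i, (X i - Xbar) ^ 4)
    (hpos : μ₂ > 0) :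
    μ₃ ^ 2 / μ₂ ^ 3 + 1 ≤ μ₄ / μ₂ ^ 2 := by
  have hN0 : (N : ℝ) ≠ 0 := by
    rintro hN0
    simp only [hN0, div_zero, zero_mul] at hμ₂
    linarith
  have hcentred : ∑ i, (X i - Xbar) = 0 := by
    rw [sum_sub_distrib, sum_const, card_fin, nsmul_eq_mul, hXbar]
    field_simp
    ring
  have hS₂ : ∑ i, (X i - Xbar) ^ 2 = N * μ₂ := by rw [hμ₂]; field_simp
  have hS₃ : ∑ i, (X i - Xbar) ^ 3 = N * μ₃ := by rw [hμ₃]; field_simp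
  have hS₄ : ∑ i, (X i - Xbar) ^ 4 = N * μ₄ := by rw [hμ₄]; field_simp
  have hvar : ∑ i, ((X i - Xbar) ^ 2 - μ₂) ^ 2 = N * (μ₄ - μ₂ ^ 2) := by
    have hexpand : ∀ i, ((X i - Xbar) ^ 2 - μ₂) ^ 2
        = (X i - Xbar) ^ 4 - 2 * μ₂ * (X i - Xbar) ^ 2 + μ₂ ^ 2 := fun i => by ring
    simp only [hexpand, sum_add_distrib, sum_sub_distrib, ← mul_sum, sum_const, card_fin,
      nsmul_eq_mul, hS₂, hS₄]
    ring
  have hCS := sq_sum_pow_three_le_of_sum_eq_zero univ (fun i => X i - Xbar) hcentred μ₂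
  simp only [hS₂, hS₃, hvar] at hCS
  have hpearson : μ₃ ^ 2 ≤ μ₂ * (μ₄ - μ₂ ^ 2) := by
    have hN2 : (0 : ℝ) < N ^ 2 := by positivity
    nlinarith
  rw [← sub_nonneg]
  have hdiff : μ₄ / μ₂ ^ 2 - (μ₃ ^ 2 / μ₂ ^ 3 + 1) = (μ₂ * (μ₄ - μ₂ ^ 2) - μ₃ ^ 2) / μ₂ ^ 3 := by
    field_simp
    ring
  rw [hdiff]
  exact div_nonneg (sub_nonneg.2 hpearson) (by positivity)

theorem stmt_6 (N : ℕ) (hN : 2 ≤ N) (X : Fin N → ℝ)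
    (Xbar μ₂ μ₃ μ₄ : ℝ)
    (hXbar : Xbar = (1 / (N : ℝ)) * ∑ i, X i)
    (hμ₂ : μ₂ = (1 / (N : ℝ)) * ∑ i, (X i - Xbar) ^ 2)
    (hμ₃ : μ₃ = (1 / (N : ℝ)) * ∑ i, (X i - Xbar) ^ 3)
    (hμ₄ : μ₄ = (1 / (N : ℝ)) * ∑ i, (X i - Xbar) ^ 4)
    (hpos : μ₂ > 0) :
    μ₃ ^ 2 / μ₂ ^ 3 + 1 ≤ μ₄ / μ₂ ^ 2 :=
  stmt_6_general N X Xbar μ₂ μ₃ μ₄ hXbar hμ₂ hμ₃ hμ₄ hpos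
end
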